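/- arXiv:2108.11313 — 2 statements merged into one kernel-verified Lean document; each statement's English description precedes it below -/
import Mathlib

section
/- Let u = u_1...u_m and v = v_1...v_n be nonempty words over integers ≥ 2. Then K̇^∘(u*v) − K̇^∘(uv) = ([u*]• − [u]•)·([v]• − [v*]•)·K̇(u)·K̇(v), where [w]• = K̇(w_2...w_k)/K̇(w_1...w_k) is the value of the semi-regular continued fraction, w* is the reversal of w, and K̇^∘ is the cyclic semi-regular continuant. -/
/-- Semi-regular continuant read from the last element: helper on the reversed list. -/
def contKsf {R : Type*} [Ring R] : List R → R
  | [] => 1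
  | [a] => a
  | a :: b :: l => a * contKsf (b :: l) - contKsf l

/-- Semi-regular continuant `K̇`. -/
def contKs {R : Type*} [Ring R] (l : List R) : R := contKsf l.reverse

/-- Cyclic semi-regular continuant: `K̇∘(x₁…xₙ) = K̇(x₁…xₙ) − K̇(x₂…xₙ₋₁)`. -/
def cycKs {R : Type*} [Ring R] (l : List R) : R := contKs l - contKs l.tail.dropLast

/-- Value of the semi-regular continued fraction `[w]• = K̇(w₂…w_k)/K̇(w₁…w_k)`. -/
def valSCF (w : List ℤ) : ℚ := (contKs w.tail : ℚ) / (contKs w : ℚ)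

/-!
With `M(a) = !![a, -1; 1, 0]`, the product `M(x₁) ⋯ M(xₙ)` is
`!![K̇(x₁…xₙ), -K̇(x₁…xₙ₋₁); K̇(x₂…xₙ), -K̇(x₂…xₙ₋₁)]`, so for a word of length at least two the
cyclic continuant is the trace of this matrix, and reversing the word replaces the matrix by its
transpose conjugated by `diag(1, -1)`. The difference of the traces for `u*v` and `uv` is therefore
bilinear in the off-diagonal entries of the matrices of `u` and `v`; it equals
`(K̇(u₁…u_{m-1}) - K̇(u₂…u_m)) · (K̇(v₂…vₙ) - K̇(v₁…v_{n-1}))`, and dividing by `K̇(u) K̇(v)`, which is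
positive when all letters are at least `2`, turns the two factors into differences of values.
-/

open Matrix

section Continuant

variable {R : Type*} [CommRing R]

def contMat (l : List R) : Matrix (Fin 2) (Fin 2) R :=
  (l.map fun a => !![a, -1; 1, 0]).prod

@[simp]
lemma contMat_nil : contMat ([] : List R) = 1 := rfl

lemma contMat_cons (a : R) (l : List R) : contMat (a :: l) = !![a, -1; 1, 0] * contMat l := rfl

lemma contMat_append (l₁ l₂ : List R) : contMat (l₁ ++ l₂) = contMat l₁ * contMat l₂ := by
  simp [contMat]

lemma contMat_cons_zero_zero (a : R) (l : List R) :
    contMat (a :: l) 0 0 = a * contMat l 0 0 - contMat l 1 0 := by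
  simp [contMat_cons, Matrix.mul_apply, Fin.sum_univ_two, sub_eq_add_neg]

lemma contMat_cons_one_zero (a : R) (l : List R) : contMat (a :: l) 1 0 = contMat l 0 0 := by
  simp [contMat_cons, Matrix.mul_apply, Fin.sum_univ_two]

lemma contMat_cons_one_one (a : R) (l : List R) : contMat (a :: l) 1 1 = contMat l 0 1 := by
  simp [contMat_cons, Matrix.mul_apply, Fin.sum_univ_two]

lemma contMat_zero_zero_eq_contKsf : ∀ l : List R, contMat l 0 0 = contKsf l
  | [] => rfl
  | [a] => by simp [contMat_cons_zero_zero, contKsf]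
  | a :: b :: l => by
    rw [contMat_cons_zero_zero, contMat_cons_one_zero, contMat_zero_zero_eq_contKsf (b :: l),
      contMat_zero_zero_eq_contKsf l, contKsf]

/-- Conjugating by `diag(1, -1)` transposes each factor `!![a, -1; 1, 0]`. -/
lemma contMat_reverse (l : List R) :
    contMat l.reverse = diagonal ![1, -1] * (contMat l)ᵀ * diagonal ![1, -1] := by
  induction l with
  | nil => ext i j; fin_cases i <;> fin_cases j <;> simp
  | cons a l ih =>
    have hconj :
        diagonal ![1, -1] * !![a, -1; 1, 0] = !![a, -1; 1, 0]ᵀ * diagonal ![(1 : R), -1] := by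
      ext i j; fin_cases i <;> fin_cases j <;> simp
    rw [List.reverse_cons, contMat_append, ih, contMat_cons, contMat_nil, Matrix.mul_one,
      contMat_cons, Matrix.transpose_mul, Matrix.mul_assoc _ _ !![a, -1; 1, 0], hconj]
    simp only [Matrix.mul_assoc]

lemma contKsf_reverse (l : List R) : contKsf l.reverse = contKsf l := by
  rw [← contMat_zero_zero_eq_contKsf, ← contMat_zero_zero_eq_contKsf, contMat_reverse]
  simp [Matrix.mul_apply]

lemma contKs_reverse (l : List R) : contKs l.reverse = contKs l := by
  rw [contKs, contKs, List.reverse_reverse, contKsf_reverse]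

lemma contMat_zero_zero (l : List R) : contMat l 0 0 = contKs l := by
  rw [contMat_zero_zero_eq_contKsf, contKs, contKsf_reverse]

lemma contMat_one_zero {l : List R} (hl : l ≠ []) : contMat l 1 0 = contKs l.tail := by
  obtain ⟨a, t, rfl⟩ := List.exists_cons_of_ne_nil hl
  rw [contMat_cons_one_zero, contMat_zero_zero, List.tail_cons]

lemma contMat_zero_one {l : List R} (hl : l ≠ []) : contMat l 0 1 = -contKs l.dropLast := by
  have h := contMat_one_zero (List.reverse_ne_nil_iff.mpr hl)
  rw [contMat_reverse, List.tail_reverse, contKs_reverse] at h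
  simpa [Matrix.mul_apply, neg_eq_iff_eq_neg] using h

lemma contMat_one_one {l : List R} (hl : 2 ≤ l.length) :
    contMat l 1 1 = -contKs l.tail.dropLast := by
  obtain ⟨a, t, rfl⟩ := List.exists_cons_of_length_pos (by omega : 0 < l.length)
  have ht : t ≠ [] := List.ne_nil_of_length_pos (by rw [List.length_cons] at hl; omega)
  rw [contMat_cons_one_one, contMat_zero_one ht, List.tail_cons]

lemma cycKs_eq_trace_contMat {l : List R} (hl : 2 ≤ l.length) : cycKs l = (contMat l).trace := by
  rw [Matrix.trace_fin_two, contMat_zero_zero, contMat_one_one hl, cycKs, sub_eq_add_neg]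

lemma trace_conj_transpose_mul_sub_trace_mul (A B : Matrix (Fin 2) (Fin 2) R) :
    (diagonal ![1, -1] * Aᵀ * diagonal ![1, -1] * B).trace - (A * B).trace =
      -(A 0 1 + A 1 0) * (B 0 1 + B 1 0) := by
  simp [Matrix.trace_fin_two, Matrix.mul_apply, Fin.sum_univ_two]
  ring

theorem cycKs_reverse_append_sub_cycKs_append {x y : List R} (hx : x ≠ []) (hy : y ≠ []) :
    cycKs (x.reverse ++ y) - cycKs (x ++ y) =
      (contKs x.dropLast - contKs x.tail) * (contKs y.tail - contKs y.dropLast) := by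
  have hlen : ∀ x' : List R, x'.length = x.length → 2 ≤ (x' ++ y).length := fun x' h => by
    have := List.length_pos_iff.mpr hx
    have := List.length_pos_iff.mpr hy
    simp only [List.length_append, h]
    omega
  rw [cycKs_eq_trace_contMat (hlen _ List.length_reverse), cycKs_eq_trace_contMat (hlen _ rfl),
    contMat_append, contMat_append, contMat_reverse, trace_conj_transpose_mul_sub_trace_mul,
    contMat_zero_one hx, contMat_one_zero hx, contMat_zero_one hy, contMat_one_zero hy]
  ring

end Continuant

section Positivity

variable {R : Type*} [CommRing R] [LinearOrder R] [IsStrictOrderedRing R]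

lemma contMat_one_zero_nonneg_and_lt_zero_zero :
    ∀ l : List R, (∀ i ∈ l, 2 ≤ i) → 0 ≤ contMat l 1 0 ∧ contMat l 1 0 < contMat l 0 0
  | [], _ => by simp
  | a :: l, h => by
    obtain ⟨h₀, h₁⟩ := contMat_one_zero_nonneg_and_lt_zero_zero l fun i hi => h i (by simp [hi])
    have ha : 2 ≤ a := h a (by simp)
    rw [contMat_cons_zero_zero, contMat_cons_one_zero]
    constructor <;> nlinarith

lemma contKs_pos {l : List R} (h : ∀ i ∈ l, 2 ≤ i) : 0 < contKs l := by
  obtain ⟨h₀, h₁⟩ := contMat_one_zero_nonneg_and_lt_zero_zero l h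
  rw [← contMat_zero_zero]
  exact h₀.trans_lt h₁

end Positivity

theorem stmt7 (u v : List ℤ) (hu : u ≠ []) (hv : v ≠ [])
    (h2 : ∀ i ∈ u ++ v, 2 ≤ i) :
    (cycKs (u.reverse ++ v) : ℚ) - (cycKs (u ++ v) : ℚ) =
      (valSCF u.reverse - valSCF u) * (valSCF v - valSCF v.reverse) *
        (contKs u : ℚ) * (contKs v : ℚ) := by
  have hcast (w : List ℤ) : (w : List ℚ) = w.map Int.cast := by
    simp only [bind_pure_comp, List.map_eq_map]
  have hK (w : List ℤ) (hw : ∀ i ∈ w, 2 ≤ i) : contKs (w.map Int.cast : List ℚ) ≠ 0 :=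
    (contKs_pos (by simpa using fun i hi => (Int.cast_le (R := ℚ)).mpr (hw i hi))).ne'
  have hKu := hK u fun i hi => h2 i (List.mem_append_left v hi)
  have hKv := hK v fun i hi => h2 i (List.mem_append_right u hi)
  simp only [valSCF, hcast, List.map_append, List.map_reverse, List.map_tail, List.map_dropLast,
    List.tail_reverse, contKs_reverse]
  rw [cycKs_reverse_append_sub_cycKs_append (by simpa) (by simpa)]
  field_simp
end

section
/- Let A = {a < b} be a binary ordered alphabet. A cyclic word w over A is singular (every factorization w = uv into nonempty non-palindromes is synchronizing) if and only if w is balanced (for all factors u, v of the cyclic word w of equal length, ||u|_a − |v|_a| ≤ 1). -/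
/-!
If `uv` is a non-synchronizing factorization with `u ≺ u*`, comparing each of `u`, `v` with its
reversal at the first mismatch gives `u = s a q b s*` and `v = t b q' a t*`; then `b s* t b` and
`a t* s a` are factors of the cyclic word of equal length whose `a`-counts differ by two.

Conversely, take an unbalanced pair of factors `u`, `v` of minimal length. Cutting `u` and `v`
into pieces of matching lengths, each pair of pieces has `a`-count difference at most one by
minimality, hence exactly one since the total is at least two. Comparing prefix counts, then
prefix counts against suffix counts, forces `u = a p a` and `v = b p b` with `p` a palindrome. Minimality also forbids the two occurrences to overlap (the
non-overlapping parts would be a shorter unbalanced pair), so the cyclic word has a conjugate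
`a p a x b p b y`, and its factorization `(p a x b p)(b y a)` is not synchronizing.
-/

/-- The lexicographic order on words induced by the order of the alphabet, with the
convention that `u ≺ v` whenever `v` is a proper prefix of `u`. -/
def wlt {A : Type*} [LinearOrder A] (u v : List A) : Prop :=
  (v ≠ u ∧ v <+: u) ∨
    ∃ (p s t : List A) (x y : A), x < y ∧ u = p ++ x :: s ∧ v = p ++ y :: t

/-- The alternating lexicographic order on words: at the first difference, the order of
letters is used at even (0-based) positions and reversed at odd positions; if `v` is a
proper prefix of `u` then `u ≺_alt v` when `|v|` is even and `v ≺_alt u` when `|v|` is odd. -/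
def altlt {A : Type*} [LinearOrder A] (u v : List A) : Prop :=
  (v ≠ u ∧ v <+: u ∧ Even v.length) ∨ (u ≠ v ∧ u <+: v ∧ Odd u.length) ∨
    ∃ (p s t : List A) (x y : A), u = p ++ x :: s ∧ v = p ++ y :: t ∧
      ((Even p.length ∧ x < y) ∨ (Odd p.length ∧ y < x))

/-- `r` is a linear representation (rotation) of the cyclic word represented by `w`. -/
def isRot {A : Type*} (w r : List A) : Prop := ∃ s t : List A, w = s ++ t ∧ r = t ++ s

/-- `f` is a factor of the cyclic word represented by `w`. -/
def isCFactor {A : Type*} (f w : List A) : Prop := ∃ r : List A, isRot w r ∧ f <:+: r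

/-- The cyclic word represented by `w` is singular: every factorization of it into two
nonempty non-palindromes `u`, `v` is synchronizing (`u ≺ u*` iff `v ≺ v*`). -/
def cyclicSingular {A : Type*} [LinearOrder A] (w : List A) : Prop :=
  ∀ u v : List A, u ≠ [] → v ≠ [] → isRot w (u ++ v) →
    u ≠ u.reverse → v ≠ v.reverse → (wlt u u.reverse ↔ wlt v v.reverse)

/-- `δ_b(w) = Σ_{c>b} |w|_c − Σ_{a<b} |w|_a`. -/
def deltaW {A : Type*} [LinearOrder A] [Fintype A] (w : List A) (b : A) : ℤ :=
  (∑ c ∈ Finset.univ.filter (fun c => b < c), (w.count c : ℤ)) -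
    (∑ a ∈ Finset.univ.filter (fun a => a < b), (w.count a : ℤ))

section CyclicFactors

variable {A : Type*}

theorem isRot_iff_isRotated {w r : List A} : isRot w r ↔ w ~r r := by
  constructor
  · rintro ⟨s, t, rfl, rfl⟩
    exact ⟨s.length, List.rotate_append_length_eq s t⟩
  · rintro ⟨n, rfl⟩
    exact ⟨w.take (n % w.length), w.drop (n % w.length), (List.take_append_drop _ _).symm,
      List.rotate_eq_drop_append_take_mod⟩

theorem isCFactor_iff {f w : List A} : isCFactor f w ↔ ∃ r, w ~r r ∧ f <:+: r := by
  simp only [isCFactor, isRot_iff_isRotated]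

theorem isCFactor.of_infix {f g w : List A} (hf : isCFactor f w) (hg : g <:+: f) :
    isCFactor g w :=
  let ⟨r, hr, hfr⟩ := hf
  ⟨r, hr, hg.trans hfr⟩

theorem isCFactor.mem {f w : List A} (hf : isCFactor f w) {x : A} (hx : x ∈ f) : x ∈ w := by
  obtain ⟨r, hr, hfr⟩ := isCFactor_iff.1 hf
  exact hr.mem_iff.2 (hfr.subset hx)

theorem isCFactor.exists_isRotated_append {f w : List A} (hf : isCFactor f w) :
    ∃ z, w ~r f ++ z := by
  obtain ⟨r, hr, s, t, rfl⟩ := isCFactor_iff.1 hf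
  exact ⟨t ++ s, hr.trans (by simpa using List.isRotated_append (l := s) (l' := f ++ t))⟩

theorem disjoint_or_overlap_of_append_eq {u v s t z : List A} (hl : u.length = v.length)
    (h : u ++ z = s ++ v ++ t) :
    (∃ x, z = x ++ v ++ t) ∨ ∃ m r, m ≠ [] ∧ u = s ++ m ∧ v = m ++ r := by
  rw [List.append_assoc] at h
  rcases List.append_eq_append_iff.1 h with ⟨x, rfl, hz⟩ | ⟨m, rfl, hm⟩
  · exact Or.inl ⟨x, by simp [hz]⟩
  · rcases eq_or_ne m [] with rfl | hm0
    · exact Or.inl ⟨[], by simpa using hm.symm⟩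
    · obtain ⟨r, rfl⟩ := List.prefix_of_prefix_length_le ⟨z, hm.symm⟩ ⟨t, rfl⟩
        (by simp only [List.length_append] at hl; omega)
      exact Or.inr ⟨m, r, hm0, rfl, rfl⟩

theorem isCFactor.disjoint_or_overlap {u v w : List A} (hu : isCFactor u w)
    (hv : isCFactor v w) (hl : u.length = v.length) :
    (∃ x y, w ~r u ++ x ++ v ++ y) ∨
      ∃ s m t, m ≠ [] ∧ ((u = s ++ m ∧ v = m ++ t) ∨ (u = m ++ s ∧ v = t ++ m)) := by
  obtain ⟨z, hz⟩ := hu.exists_isRotated_append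
  have of_append_eq : ∀ s t, u ++ z = s ++ v ++ t → (∃ x y, w ~r u ++ x ++ v ++ y) ∨
      ∃ s m t, m ≠ [] ∧ ((u = s ++ m ∧ v = m ++ t) ∨ (u = m ++ s ∧ v = t ++ m)) := by
    intro s t h
    rcases disjoint_or_overlap_of_append_eq hl h with ⟨x, rfl⟩ | ⟨m, r, hm, hu, hv⟩
    · exact Or.inl ⟨x, t, by simpa using hz⟩
    · exact Or.inr ⟨s, m, r, hm, Or.inl ⟨hu, hv⟩⟩
  obtain ⟨y, hy⟩ := hv.exists_isRotated_append
  obtain ⟨s, t, hst, hts⟩ := isRot_iff_isRotated.2 (hz.symm.trans hy)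
  rcases List.append_eq_append_iff.1 hts with ⟨x, rfl, rfl⟩ | ⟨m, rfl, rfl⟩
  · exact of_append_eq s x (by simp [hst])
  · rcases eq_or_ne m [] with rfl | hm
    · exact of_append_eq y [] (by simpa using hst)
    · obtain ⟨s', rfl⟩ := List.prefix_of_prefix_length_le (l₁ := m) (l₂ := u) (l₃ := u ++ z)
        ⟨y ++ t, by simp [hst]⟩ ⟨z, rfl⟩ (by simp only [List.length_append] at hl; omega)
      exact Or.inr ⟨s', m, t, hm, Or.inr ⟨rfl, rfl⟩⟩

end CyclicFactors

section Reversal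

variable {A : Type*}

theorem exists_eq_append_of_ne_reverse {u : List A} (h : u ≠ u.reverse) :
    ∃ c q x y, x ≠ y ∧ u = c ++ [x] ++ q ++ [y] ++ c.reverse := by
  induction u using List.bidirectionalRec with
  | nil => exact absurd rfl h
  | singleton x => exact absurd rfl h
  | cons_append x m y ih =>
    by_cases hxy : x = y
    · subst hxy
      obtain ⟨c, q, x', y', hne, rfl⟩ := ih (by simpa using h)
      exact ⟨x :: c, q, x', y', hne, by simp⟩
    · exact ⟨[], m, x, y, hxy, by simp⟩

theorem ne_reverse_of_ne {c q : List A} {x y : A} (hxy : x ≠ y) :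
    c ++ [x] ++ q ++ [y] ++ c.reverse ≠ (c ++ [x] ++ q ++ [y] ++ c.reverse).reverse := by
  simp [hxy]

theorem append_cons_inj_of_ne {p p' s s' t t' : List A} {x x' y y' : A} (hxy : x ≠ y)
    (hxy' : x' ≠ y') (h₁ : p ++ x :: s = p' ++ x' :: s') (h₂ : p ++ y :: t = p' ++ y' :: t') :
    p = p' ∧ x = x' ∧ y = y' := by
  induction p generalizing p' with
  | nil =>
    cases p' with
    | nil => simp_all
    | cons z p' =>
      simp only [List.nil_append, List.cons_append, List.cons.injEq] at h₁ h₂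
      exact absurd (h₁.1.trans h₂.1.symm) hxy
  | cons z p ih =>
    cases p' with
    | nil =>
      simp only [List.nil_append, List.cons_append, List.cons.injEq] at h₁ h₂
      exact absurd (h₁.1.symm.trans h₂.1) hxy'
    | cons z' p' =>
      simp only [List.cons_append, List.cons.injEq] at h₁ h₂
      obtain ⟨rfl, rfl, rfl⟩ := ih h₁.2 h₂.2
      exact ⟨by rw [h₁.1], rfl, rfl⟩

theorem exists_eq_cons_append_singleton {l : List A} (h : 2 ≤ l.length) :
    ∃ x m y, l = x :: (m ++ [y]) := by
  obtain _ | ⟨x, l⟩ := l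
  · simp at h
  · obtain rfl | ⟨m, y, rfl⟩ := l.eq_nil_or_concat'
    · simp at h
    · exact ⟨x, m, y, rfl⟩

theorem cons_append_singleton_eq_take_append_drop {x y : A} {l : List A} (k : ℕ) :
    x :: (l ++ [y]) = (x :: l.take k) ++ (l.drop k ++ [y]) := by
  rw [List.cons_append, ← List.append_assoc, List.take_append_drop]

variable [LinearOrder A]

theorem wlt_append_cons_iff {p s t : List A} {x y : A} (hxy : x ≠ y) :
    wlt (p ++ x :: s) (p ++ y :: t) ↔ x < y := by
  refine ⟨?_, fun h => Or.inr ⟨p, s, t, x, y, h, rfl, rfl⟩⟩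
  rintro (⟨-, hpre⟩ | ⟨p', s', t', x', y', hlt, h₁, h₂⟩)
  · exact absurd (List.cons_prefix_cons.1 ((List.prefix_append_right_inj p).1 hpre)).1 hxy.symm
  · obtain ⟨-, rfl, rfl⟩ := append_cons_inj_of_ne hxy hlt.ne h₁ h₂
    exact hlt

theorem wlt_reverse_iff {c q : List A} {x y : A} (hxy : x ≠ y) :
    wlt (c ++ [x] ++ q ++ [y] ++ c.reverse) (c ++ [x] ++ q ++ [y] ++ c.reverse).reverse ↔
      x < y := by
  simpa using wlt_append_cons_iff (p := c) (s := q ++ y :: c.reverse)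
    (t := q.reverse ++ x :: c.reverse) hxy

theorem exists_eq_of_ne_reverse_of_binary {a b : A} (hab : a < b) {u : List A}
    (hu : ∀ x ∈ u, x = a ∨ x = b) (h : u ≠ u.reverse) :
    ∃ c q, (wlt u u.reverse → u = c ++ [a] ++ q ++ [b] ++ c.reverse) ∧
      (¬ wlt u u.reverse → u = c ++ [b] ++ q ++ [a] ++ c.reverse) := by
  obtain ⟨c, q, x, y, hxy, rfl⟩ := exists_eq_append_of_ne_reverse h
  rw [wlt_reverse_iff hxy]
  refine ⟨c, q, ?_⟩
  rcases hu x (by simp) with rfl | rfl <;> rcases hu y (by simp) with rfl | rfl <;>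
    simp_all [hab.not_gt]

theorem exists_unbalanced_of_not_synchronizing {a b : A} (hab : a < b) {u v : List A}
    (hbin : ∀ x ∈ u ++ v, x = a ∨ x = b) (hu : u ≠ u.reverse) (hv : v ≠ v.reverse)
    (hwu : wlt u u.reverse) (hwv : ¬ wlt v v.reverse) :
    ∃ f g, f <:+: u ++ v ∧ g <:+: v ++ u ∧ f.length = g.length ∧
      f.count a + 2 = g.count a := by
  obtain ⟨s, q, hsq, -⟩ :=
    exists_eq_of_ne_reverse_of_binary hab (fun x hx => hbin x (by simp [hx])) hu
  obtain ⟨t, q', -, htq⟩ :=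
    exists_eq_of_ne_reverse_of_binary hab (fun x hx => hbin x (by simp [hx])) hv
  rw [hsq hwu, htq hwv]
  refine ⟨[b] ++ s.reverse ++ t ++ [b], [a] ++ t.reverse ++ s ++ [a],
    ⟨s ++ [a] ++ q, q' ++ [a] ++ t.reverse, by simp⟩,
    ⟨t ++ [b] ++ q', q ++ [b] ++ s.reverse, by simp⟩, by simp; omega, ?_⟩
  simp [List.count_append, hab.ne']
  omega

end Reversal

section ShortestUnbalancedPair

variable {A : Type*} [DecidableEq A]

theorem eq_and_eq_of_count_singleton_eq_add_one {a b x y : A} (hy : y = a ∨ y = b)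
    (h : [x].count a = [y].count a + 1) : x = a ∧ y = b := by
  by_cases hx : x = a <;> rcases hy with rfl | rfl <;> simp_all [List.count_singleton]

theorem eq_of_count_take_eq {a b : A} (hab : a ≠ b) :
    ∀ {l₁ l₂ : List A}, (∀ x ∈ l₁, x = a ∨ x = b) → (∀ x ∈ l₂, x = a ∨ x = b) →
      l₁.length = l₂.length → (∀ k ≤ l₁.length, (l₁.take k).count a = (l₂.take k).count a) →
      l₁ = l₂
  | [], [], _, _, _, _ => rfl
  | [], _ :: _, _, _, hl, _ => absurd hl (by simp)
  | _ :: _, [], _, _, hl, _ => absurd hl (by simp)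
  | x :: l₁, y :: l₂, h₁, h₂, hl, h => by
    have hxy : x = y := by
      have := h 1 (by simp)
      rcases h₁ x (by simp) with rfl | rfl <;> rcases h₂ y (by simp) with rfl | rfl <;>
        simp_all [hab.symm]
    subst hxy
    congr 1
    exact eq_of_count_take_eq hab (fun z hz => h₁ z (by simp [hz]))
      (fun z hz => h₂ z (by simp [hz])) (by simpa using hl)
      fun k hk => by
        have := h (k + 1) (by simp only [List.length_cons] at hk ⊢; omega)
        simp only [List.take_succ_cons, List.count_cons] at this
        omega

structure IsShortestUnbalancedPair (F : List A → Prop) (a : A) (u v : List A) : Prop where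
  left : F u
  right : F v
  length_eq : u.length = v.length
  count_add_two_le : v.count a + 2 ≤ u.count a
  count_le_of_length_lt : ∀ x y, F x → F y → x.length = y.length → x.length < u.length →
    x.count a ≤ y.count a + 1

theorem exists_isShortestUnbalancedPair {F : List A → Prop} {a : A} {u v : List A} (hu : F u)
    (hv : F v) (hl : u.length = v.length) (hc : v.count a + 2 ≤ u.count a) :
    ∃ u' v', IsShortestUnbalancedPair F a u' v' := by
  classical
  have hex : ∃ n, ∃ u v, F u ∧ F v ∧ u.length = n ∧ v.length = n ∧
      v.count a + 2 ≤ u.count a :=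
    ⟨_, u, v, hu, hv, rfl, hl.symm, hc⟩
  obtain ⟨u', v', hu', hv', hlu, hlv, hc'⟩ := Nat.find_spec hex
  refine ⟨u', v', hu', hv', hlu.trans hlv.symm, hc', fun x y hx hy hxy hlt => ?_⟩
  by_contra! h
  exact Nat.find_min hex (hlu ▸ hlt) ⟨x, y, hx, hy, rfl, hxy.symm, by omega⟩

namespace IsShortestUnbalancedPair

variable {F : List A → Prop} {a : A} {u v : List A}

theorem count_split (h : IsShortestUnbalancedPair F a u v)
    (hF : ∀ ⦃x y⦄, F x → y <:+: x → F y) {u₁ u₂ v₁ v₂ : List A} (hu : u = u₁ ++ u₂)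
    (hv : v = v₁ ++ v₂ ∨ v = v₂ ++ v₁) (hl : u₁.length = v₁.length) (h₁ : u₁ ≠ [])
    (h₂ : u₂ ≠ []) :
    u₁.count a = v₁.count a + 1 ∧ u₂.count a = v₂.count a + 1 := by
  have hpos₁ := List.length_pos_iff.2 h₁
  have hpos₂ := List.length_pos_iff.2 h₂
  have hlen := h.length_eq
  have hc := h.count_add_two_le
  have hFu₁ : F u₁ := hF h.left (hu ▸ (List.prefix_append u₁ u₂).isInfix)
  have hFu₂ : F u₂ := hF h.left (hu ▸ (List.suffix_append u₁ u₂).isInfix)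
  have hFv : F v₁ ∧ F v₂ := by
    rcases hv with rfl | rfl
    · exact ⟨hF h.right (List.prefix_append v₁ v₂).isInfix,
        hF h.right (List.suffix_append v₁ v₂).isInfix⟩
    · exact ⟨hF h.right (List.suffix_append v₂ v₁).isInfix,
        hF h.right (List.prefix_append v₂ v₁).isInfix⟩
  have hv' : v.length = v₁.length + v₂.length ∧ v.count a = v₁.count a + v₂.count a := by
    rcases hv with rfl | rfl <;> simp [List.count_append, add_comm]
  subst hu
  simp only [List.length_append, List.count_append] at hlen hc
  have e₁ := h.count_le_of_length_lt u₁ v₁ hFu₁ hFv.1 hl (by simp; omega)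
  have e₂ := h.count_le_of_length_lt u₂ v₂ hFu₂ hFv.2 (by omega) (by simp; omega)
  omega

theorem exists_eq_cons_append (h : IsShortestUnbalancedPair F a u v)
    (hF : ∀ ⦃x y⦄, F x → y <:+: x → F y) {b : A} (hb : ∀ c ∈ v, c = a ∨ c = b) :
    ∃ m q, u = a :: (m ++ [a]) ∧ v = b :: (q ++ [b]) := by
  have hlen := h.length_eq
  have two_le : 2 ≤ u.length := by
    have := List.count_le_length (a := a) (l := u)
    have := h.count_add_two_le
    omega
  obtain ⟨x, m, x', rfl⟩ := exists_eq_cons_append_singleton two_le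
  obtain ⟨y, q, y', rfl⟩ := exists_eq_cons_append_singleton (hlen ▸ two_le)
  obtain ⟨rfl, rfl⟩ := eq_and_eq_of_count_singleton_eq_add_one (hb y (by simp))
    (h.count_split hF (u₁ := [x]) (v₁ := [y]) rfl (Or.inl rfl) rfl (by simp) (by simp)).1
  obtain ⟨rfl, rfl⟩ := eq_and_eq_of_count_singleton_eq_add_one (hb y' (by simp))
    (h.count_split hF (u₁ := x :: m) (u₂ := [x']) (v₁ := y :: q) (v₂ := [y']) (by simp)
      (Or.inl (by simp)) (by simpa using hlen) (by simp) (by simp)).2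
  exact ⟨m, q, rfl, rfl⟩

theorem exists_palindrome (h : IsShortestUnbalancedPair F a u v)
    (hF : ∀ ⦃x y⦄, F x → y <:+: x → F y) {b : A}
    (hbin : ∀ ⦃x⦄, F x → ∀ c ∈ x, c = a ∨ c = b) (hab : a ≠ b) :
    ∃ p, p.reverse = p ∧ u = [a] ++ p ++ [a] ∧ v = [b] ++ p ++ [b] := by
  obtain ⟨m, q, rfl, rfl⟩ := h.exists_eq_cons_append hF (hbin h.right)
  have hmq : m.length = q.length := by simpa using h.length_eq
  have hbm : ∀ c ∈ m, c = a ∨ c = b := fun c hc => hbin h.left c (by simp [hc])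
  have hprefix : ∀ k ≤ m.length, (m.take k).count a = (q.take k).count a := by
    intro k hk
    have := (h.count_split hF (u₁ := a :: m.take k) (u₂ := m.drop k ++ [a])
      (v₁ := b :: q.take k) (v₂ := q.drop k ++ [b])
      (cons_append_singleton_eq_take_append_drop k)
      (Or.inl (cons_append_singleton_eq_take_append_drop k)) (by simp; omega) (by simp) (by simp)).1
    simpa [hab.symm] using this
  obtain rfl : m = q :=
    eq_of_count_take_eq hab hbm (fun c hc => hbin h.right c (by simp [hc])) hmq hprefix
  -- prefixes of `u` against suffixes of `v`
  have hreverse : ∀ k ≤ m.reverse.length, (m.reverse.take k).count a = (m.take k).count a := by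
    intro k hk
    rw [List.length_reverse] at hk
    have := (h.count_split hF (u₁ := a :: m.take k) (u₂ := m.drop k ++ [a])
      (v₁ := m.drop (m.length - k) ++ [b]) (v₂ := b :: m.take (m.length - k))
      (cons_append_singleton_eq_take_append_drop k)
      (Or.inr (cons_append_singleton_eq_take_append_drop _)) (by simp; omega) (by simp) (by simp)).1
    rw [List.take_reverse, List.count_reverse]
    simpa [hab.symm] using this.symm
  exact ⟨m, eq_of_count_take_eq hab (fun c hc => hbm c (List.mem_reverse.1 hc)) hbm (by simp)
    hreverse, by simp, by simp⟩

theorem eq_nil_of_overlap (h : IsShortestUnbalancedPair F a u v)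
    (hF : ∀ ⦃x y⦄, F x → y <:+: x → F y) {s m t : List A} (hu : u = s ++ m ∨ u = m ++ s)
    (hv : v = m ++ t ∨ v = t ++ m) : m = [] := by
  by_contra hm
  have hpos := List.length_pos_iff.2 hm
  have hlen := h.length_eq
  have hc := h.count_add_two_le
  have hs : F s ∧ s.length + m.length = u.length ∧ s.count a + m.count a = u.count a := by
    rcases hu with rfl | rfl
    · exact ⟨hF h.left (List.prefix_append s m).isInfix, by simp, by simp [List.count_append]⟩
    · exact ⟨hF h.left (List.suffix_append m s).isInfix, by simp [add_comm],
        by simp [List.count_append, add_comm]⟩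
  have ht : F t ∧ t.length + m.length = v.length ∧ t.count a + m.count a = v.count a := by
    rcases hv with rfl | rfl
    · exact ⟨hF h.right (List.suffix_append m t).isInfix, by simp [add_comm],
        by simp [List.count_append, add_comm]⟩
    · exact ⟨hF h.right (List.prefix_append t m).isInfix, by simp, by simp [List.count_append]⟩
  have := h.count_le_of_length_lt s t hs.1 ht.1 (by omega) (by omega)
  omega

end IsShortestUnbalancedPair

end ShortestUnbalancedPair

theorem not_cyclicSingular_of_unbalanced {A : Type*} [LinearOrder A] {a b : A} (hab : a < b)
    {w u v : List A} (hbin : ∀ x ∈ w, x = a ∨ x = b) (hu : isCFactor u w) (hv : isCFactor v w)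
    (hl : u.length = v.length) (hc : v.count a + 2 ≤ u.count a) : ¬ cyclicSingular w := by
  have hF : ∀ ⦃x y : List A⦄, isCFactor x w → y <:+: x → isCFactor y w :=
    fun _ _ hx hy => hx.of_infix hy
  obtain ⟨u, v, h⟩ := exists_isShortestUnbalancedPair (F := (isCFactor · w)) hu hv hl hc
  obtain ⟨p, hp, rfl, rfl⟩ :=
    h.exists_palindrome hF (fun _ hx c hc => hbin c (hx.mem hc)) hab.ne
  rcases h.left.disjoint_or_overlap h.right h.length_eq with
    ⟨x, y, hxy⟩ | ⟨s, m, t, hm, hov⟩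
  · intro hsing
    have hrot : isRot w
        ((p ++ [a] ++ x ++ [b] ++ p.reverse) ++ ([] ++ [b] ++ y ++ [a] ++ [].reverse)) := by
      refine isRot_iff_isRotated.2 (hxy.trans ?_)
      rw [hp]
      simpa using List.isRotated_append (l := [a]) (l' := p ++ a :: (x ++ b :: (p ++ b :: y)))
    have := hsing _ _ (by simp) (by simp) hrot (ne_reverse_of_ne hab.ne)
      (ne_reverse_of_ne hab.ne')
    rw [wlt_reverse_iff hab.ne, wlt_reverse_iff hab.ne'] at this
    exact hab.asymm (this.1 hab)
  · rcases hov with ⟨hu, hv⟩ | ⟨hu, hv⟩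
    · exact (hm (h.eq_nil_of_overlap hF (Or.inl hu) (Or.inl hv))).elim
    · exact (hm (h.eq_nil_of_overlap hF (Or.inr hu) (Or.inr hv))).elim

theorem stmt11_general {A : Type*} [LinearOrder A] (a b : A) (hab : a < b) (w : List A)
    (hbin : ∀ x ∈ w, x = a ∨ x = b) :
    cyclicSingular w ↔
      ∀ u v : List A, isCFactor u w → isCFactor v w → u.length = v.length →
        ((u.count a : ℤ) - (v.count a : ℤ)).natAbs ≤ 1 := by
  constructor
  · intro hsing u v hu hv hl
    by_contra
    rcases (by omega : v.count a + 2 ≤ u.count a ∨ u.count a + 2 ≤ v.count a) with h | h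
    · exact not_cyclicSingular_of_unbalanced hab hbin hu hv hl h hsing
    · exact not_cyclicSingular_of_unbalanced hab hbin hv hu hl.symm h hsing
  · intro hbal
    have synchronizing : ∀ u v, isRot w (u ++ v) → u ≠ u.reverse → v ≠ v.reverse →
        wlt u u.reverse → wlt v v.reverse := by
      intro u v hrot hu hv hwu
      by_contra hwv
      rw [isRot_iff_isRotated] at hrot
      obtain ⟨f, g, hf, hg, hl, hc⟩ := exists_unbalanced_of_not_synchronizing hab
        (fun x hx => hbin x (hrot.mem_iff.2 hx)) hu hv hwu hwv
      have := hbal f g (isCFactor_iff.2 ⟨_, hrot, hf⟩)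
        (isCFactor_iff.2 ⟨_, hrot.trans List.isRotated_append, hg⟩) hl
      omega
    intro u v _ _ hrot hu hv
    exact ⟨synchronizing u v hrot hu hv,
      synchronizing v u (isRot_iff_isRotated.2 ((isRot_iff_isRotated.1 hrot).trans
        List.isRotated_append)) hv hu⟩

theorem stmt11 {A : Type*} [LinearOrder A] (a b : A) (hab : a < b) (w : List A)
    (hbin : ∀ x ∈ w, x = a ∨ x = b) (hne : w ≠ []) :
    cyclicSingular w ↔
      ∀ u v : List A, isCFactor u w → isCFactor v w → u.length = v.length →
        ((u.count a : ℤ) - (v.count a : ℤ)).natAbs ≤ 1 :=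
  stmt11_general a b hab w hbin
end
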